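/- Let g ≥ 2 and b > 1 be integers with gcd(b,g) = 1, let a be a positive integer with gcd(a,b) = 1, and let j ≥ 1. There exists a nonnegative integer C (depending only on g, a, b and j) such that for all k ≥ c_g(b) and all s, s' ∈ {0,…,g^j−1}: |ν_k(s) − ν_k(s')| ≤ C. -/

import Mathlib

/-!
Let `d k` be the order of `g` modulo `b ^ k`. Lifting `g ^ d k ≡ 1` gives `d (k + 1) ∣ b * d k`,
and the lifting-the-exponent lemma at each prime of `b` gives a fixed `T` with
`b ^ k ∣ b ^ T * d k`. Hence `b ^ T * d k / b ^ k` is a non-increasing sequence of naturals;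
where it is constant, `d (c + t) = b ^ t * d c`. For such `k = c + t` the orbit of `a * g ^ m`
modulo `b ^ k` has the largest possible size, so it consists of all residues that reduce into
the orbit modulo `b ^ c`. After a shift by `j`, `ν_k(s)` counts the orbit residues `r` with
`g ^ j * r / b ^ k = s`, that is, `r` in an interval of length `b ^ k / g ^ j`. Each of the
`d c` residue classes modulo `b ^ c` meets such an interval in `b ^ k / (g ^ j * b ^ c)`
points up to an error less than one, so two frequencies differ by at most `d c`.
-/

/-- `ordg g m = min {n ≥ 1 : g^n ≡ 1 (mod m)}`, the multiplicative order of `g` modulo `m`. -/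
noncomputable def ordg (g m : ℕ) : ℕ := sInf {n : ℕ | 0 < n ∧ g ^ n ≡ 1 [MOD m]}

/-- `cg g b` is the least `c ≥ 1` such that `ord_g(b^{c+t}) = b^t·ord_g(b^c)` for all `t ≥ 1`. -/
noncomputable def cg (g b : ℕ) : ℕ :=
  sInf {c : ℕ | 0 < c ∧ ∀ t : ℕ, 0 < t → ordg g (b ^ (c + t)) = b ^ t * ordg g (b ^ c)}

/-- `nu g b a j k s` is the absolute frequency of the `j`-word `s` in the enlarged
repetend of `a/b^k`. -/
noncomputable def nu (g b a j k s : ℕ) : ℕ :=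
  ((Finset.Icc j (ordg g (b ^ k) + j - 1)).filter
    (fun i => (a * g ^ i / b ^ k) % g ^ j = s)).card

open Finset

section Order

variable {g m : ℕ}

lemma pow_modEq_one_iff_zmod (n : ℕ) : g ^ n ≡ 1 [MOD m] ↔ (g : ZMod m) ^ n = 1 := by
  rw [← ZMod.natCast_eq_natCast_iff]
  push_cast
  rfl

lemma isOfFinOrder_natCast_zmod (hm : 0 < m) (hgm : g.Coprime m) : IsOfFinOrder (g : ZMod m) :=
  isOfFinOrder_iff_pow_eq_one.2
    ⟨m.totient, Nat.totient_pos.2 hm, (pow_modEq_one_iff_zmod _).1 (Nat.ModEq.pow_totient hgm)⟩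

lemma ordg_eq_orderOf (hm : 0 < m) (hgm : g.Coprime m) : ordg g m = orderOf (g : ZMod m) := by
  have hord : orderOf (g : ZMod m) ∈ {n : ℕ | 0 < n ∧ g ^ n ≡ 1 [MOD m]} :=
    ⟨orderOf_pos_iff.2 (isOfFinOrder_natCast_zmod hm hgm),
      (pow_modEq_one_iff_zmod _).2 (pow_orderOf_eq_one _)⟩
  obtain ⟨hpos, hpow⟩ := Nat.sInf_mem ⟨_, hord⟩
  exact le_antisymm (Nat.sInf_le hord)
    (orderOf_le_of_pow_eq_one hpos ((pow_modEq_one_iff_zmod _).1 hpow))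

lemma ordg_pos (hm : 0 < m) (hgm : g.Coprime m) : 0 < ordg g m := by
  rw [ordg_eq_orderOf hm hgm]
  exact orderOf_pos_iff.2 (isOfFinOrder_natCast_zmod hm hgm)

lemma ordg_dvd_iff (hm : 0 < m) (hgm : g.Coprime m) {n : ℕ} :
    ordg g m ∣ n ↔ g ^ n ≡ 1 [MOD m] := by
  rw [ordg_eq_orderOf hm hgm, orderOf_dvd_iff_pow_eq_one, pow_modEq_one_iff_zmod]

lemma pow_ordg_modEq_one (hm : 0 < m) (hgm : g.Coprime m) : g ^ ordg g m ≡ 1 [MOD m] :=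
  (ordg_dvd_iff hm hgm).1 dvd_rfl

end Order

lemma pow_succ_dvd_pow_self_sub_one {R : Type*} [CommRing R] {m k : ℕ} {x : R} (hk : k ≠ 0)
    (h : (m : R) ^ k ∣ x - 1) : (m : R) ^ (k + 1) ∣ x ^ m - 1 := by
  have hm : (m : R) ∣ x - 1 := (dvd_pow_self _ hk).trans h
  have hgeom := geom_sum₂_mul x 1 m
  rw [one_pow] at hgeom
  rw [pow_succ', ← hgeom]
  exact mul_dvd_mul (dvd_geom_sum₂_self hm) h

lemma exists_pow_dvd_pow_sub_one_le {p g : ℕ} (hp : p.Prime) (hg : 1 < g) (hpg : ¬ p ∣ g) :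
    ∃ T, ∀ n k, n ≠ 0 → p ^ k ∣ g ^ n - 1 → k ≤ T + n.factorization p := by
  have := Fact.mk hp
  simp only [Nat.factorization_def _ hp]
  -- `g ^ n - 1` divides `g ^ (2 * n) - 1`, resp. `(g ^ (p - 1)) ^ n - 1`, whose valuation is
  -- given by the lifting-the-exponent lemma.
  rcases hp.eq_two_or_odd' with rfl | hodd
  · refine ⟨padicValNat 2 (g + 1) + padicValNat 2 (g - 1), fun n k hn hk => ?_⟩
    have hne : g ^ (2 * n) - 1 ≠ 0 :=
      Nat.sub_ne_zero_of_lt (Nat.one_lt_pow (by omega) hg)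
    have hle := (padicValNat_dvd_iff_le hne).1
      (hk.trans (Nat.pow_sub_one_dvd_pow_sub_one g (dvd_mul_left n 2)))
    have hlte := padicValNat.pow_two_sub_one hg hpg (by omega) (even_two_mul n)
    rw [padicValNat.mul two_ne_zero hn, padicValNat_self] at hlte
    omega
  · have hx : 1 < g ^ (p - 1) := Nat.one_lt_pow (by have := hp.two_le; omega) hg
    have hpx : p ∣ g ^ (p - 1) - 1 := (Nat.modEq_iff_dvd' hx.le).1
      (Nat.ModEq.pow_card_sub_one_eq_one hp (hp.coprime_iff_not_dvd.2 hpg).symm).symm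
    have hpx' : ¬ p ∣ g ^ (p - 1) := fun h => hpg (hp.dvd_of_dvd_pow h)
    refine ⟨padicValNat p (g ^ (p - 1) - 1), fun n k hn hk => ?_⟩
    have hne : (g ^ (p - 1)) ^ n - 1 ≠ 0 := Nat.sub_ne_zero_of_lt (Nat.one_lt_pow hn hx)
    have hle := (padicValNat_dvd_iff_le hne).1
      (hk.trans (by rw [← pow_mul]; exact Nat.pow_sub_one_dvd_pow_sub_one _ (dvd_mul_left n _)))
    have hlte := padicValNat.pow_sub_pow hodd hx hpx hpx' hn
    rw [one_pow] at hlte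
    omega

section Structure

variable {g b : ℕ}

lemma ordg_pow_succ_dvd (hb : 0 < b) (hbg : b.Coprime g) {k : ℕ} (hk : k ≠ 0) :
    ordg g (b ^ (k + 1)) ∣ b * ordg g (b ^ k) := by
  have hmod :=
    Nat.modEq_iff_dvd.1 (pow_ordg_modEq_one (pow_pos hb k) (hbg.symm.pow_right k)).symm
  rw [ordg_dvd_iff (pow_pos hb _) (hbg.symm.pow_right _), mul_comm, pow_mul]
  refine (Nat.modEq_iff_dvd.2 ?_).symm
  push_cast at hmod ⊢
  exact pow_succ_dvd_pow_self_sub_one hk hmod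

lemma exists_pow_dvd_pow_mul_ordg (hg : 1 < g) (hb : 0 < b) (hbg : b.Coprime g) :
    ∃ T, ∀ k, b ^ k ∣ b ^ T * ordg g (b ^ k) := by
  have hT : ∀ p, ∃ T, p ∈ b.primeFactors →
      ∀ n k, n ≠ 0 → p ^ k ∣ g ^ n - 1 → k ≤ T + n.factorization p := by
    intro p
    by_cases hp : p ∈ b.primeFactors
    · have hpp := Nat.prime_of_mem_primeFactors hp
      obtain ⟨T, hT⟩ := exists_pow_dvd_pow_sub_one_le hpp hg
        fun h => hpp.ne_one (Nat.eq_one_of_dvd_coprimes hbg (Nat.dvd_of_mem_primeFactors hp) h)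
      exact ⟨T, fun _ => hT⟩
    · exact ⟨0, fun h => absurd h hp⟩
  choose T hT using hT
  refine ⟨b.primeFactors.sup T, fun k => ?_⟩
  have hd := ordg_pos (pow_pos hb k) (hbg.symm.pow_right k)
  rw [← Nat.factorization_prime_le_iff_dvd (pow_ne_zero _ hb.ne') (by positivity)]
  intro p hp
  rw [Nat.factorization_mul (by positivity) hd.ne', Nat.factorization_pow, Nat.factorization_pow]
  simp only [Finsupp.add_apply, Finsupp.smul_apply, smul_eq_mul]
  by_cases hpb : p ∣ b
  · have hmem : p ∈ b.primeFactors := Nat.mem_primeFactors.2 ⟨hp, hpb, hb.ne'⟩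
    have hpk : p ^ (k * b.factorization p) ∣ b ^ k := by
      rw [mul_comm, pow_mul]
      exact pow_dvd_pow_of_dvd (Nat.ordProj_dvd b p) k
    have hdvd : p ^ (k * b.factorization p) ∣ g ^ ordg g (b ^ k) - 1 :=
      hpk.trans ((Nat.modEq_iff_dvd' (Nat.one_le_pow _ _ (by omega))).1
        (pow_ordg_modEq_one (pow_pos hb k) (hbg.symm.pow_right k)).symm)
    have h1 := hT p hmem _ _ hd.ne' hdvd
    have h2 : T p ≤ b.primeFactors.sup T := le_sup hmem
    have h3 : 1 ≤ b.factorization p := hp.factorization_pos_of_dvd hb.ne' hpb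
    nlinarith
  · simp [Nat.factorization_eq_zero_of_not_dvd hpb]

lemma exists_ordg_pow_add_eq (hg : 1 < g) (hb : 0 < b) (hbg : b.Coprime g) :
    ∃ c, 0 < c ∧ ∀ t, ordg g (b ^ (c + t)) = b ^ t * ordg g (b ^ c) := by
  obtain ⟨T, hT⟩ := exists_pow_dvd_pow_mul_ordg hg hb hbg
  set u : ℕ → ℕ := fun k => b ^ T * ordg g (b ^ (k + 1)) / b ^ (k + 1)
  have hu : ∀ k, u k * b ^ (k + 1) = b ^ T * ordg g (b ^ (k + 1)) :=
    fun k => Nat.div_mul_cancel (hT (k + 1))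
  have hanti : Antitone u := antitone_nat_of_succ_le fun k => by
    have hd := ordg_pos (pow_pos hb (k + 1)) (hbg.symm.pow_right (k + 1))
    have hstep := Nat.le_of_dvd (Nat.mul_pos hb hd) (ordg_pow_succ_dvd hb hbg k.succ_ne_zero)
    refine Nat.le_of_mul_le_mul_right ?_ (pow_pos hb (k + 2))
    calc u (k + 1) * b ^ (k + 2) = b ^ T * ordg g (b ^ (k + 2)) := hu (k + 1)
      _ ≤ b ^ T * (b * ordg g (b ^ (k + 1))) := Nat.mul_le_mul_left _ hstep
      _ = u k * b ^ (k + 2) := by rw [pow_succ b (k + 1), ← mul_assoc (u k), hu k]; ring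
  obtain ⟨c, hc⟩ := WellFoundedLT.antitone_chain_condition hanti
  refine ⟨c + 1, c.succ_pos, fun t => ?_⟩
  have e1 := hu c
  have e2 := hu (c + t)
  rw [← hc (c + t) (by omega)] at e2
  refine Nat.eq_of_mul_eq_mul_left (by positivity : 0 < b ^ T * b ^ (c + 1)) ?_
  calc b ^ T * b ^ (c + 1) * ordg g (b ^ (c + 1 + t))
      = b ^ (c + 1) * (b ^ T * ordg g (b ^ (c + t + 1))) := by ring_nf
    _ = b ^ (c + t + 1) * (u c * b ^ (c + 1)) := by rw [← e2]; ring
    _ = b ^ T * b ^ (c + 1) * (b ^ t * ordg g (b ^ (c + 1))) := by rw [e1]; ring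

lemma ordg_pow_cg_add (hg : 1 < g) (hb : 0 < b) (hbg : b.Coprime g) (t : ℕ) :
    ordg g (b ^ (cg g b + t)) = b ^ t * ordg g (b ^ cg g b) := by
  obtain ⟨c, hc, h⟩ := exists_ordg_pow_add_eq hg hb hbg
  have hcg : cg g b ∈ {c : ℕ | 0 < c ∧ ∀ t : ℕ, 0 < t →
      ordg g (b ^ (c + t)) = b ^ t * ordg g (b ^ c)} := Nat.sInf_mem ⟨c, hc, fun t _ => h t⟩
  rcases t.eq_zero_or_pos with rfl | ht
  · simp
  · exact hcg.2 t ht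

end Structure

lemma Nat.mul_div_mod_eq_mul_mod_div (N G : ℕ) {D : ℕ} (hD : 0 < D) :
    N * G / D % G = G * (N % D) / D := by
  rcases G.eq_zero_or_pos with rfl | hG
  · simp
  conv_lhs => rw [← Nat.mod_add_div N D, add_mul, mul_assoc, Nat.add_mul_div_left _ _ hD,
    Nat.add_mul_mod_self_right]
  rw [mul_comm]
  exact Nat.mod_eq_of_lt (Nat.div_lt_of_lt_mul (by rw [mul_comm]; gcongr; exact Nat.mod_lt N hD))

lemma card_filter_mod_mem_le (M N : ℕ) (R : Finset ℕ) :
    #{r ∈ range (M * N) | r % M ∈ R} ≤ #R * N := by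
  calc #{r ∈ range (M * N) | r % M ∈ R}
      ≤ #((R ×ˢ range N).image fun q => q.1 + M * q.2) := by
        refine card_le_card fun r hr => ?_
        rw [mem_filter, mem_range] at hr
        exact mem_image.2 ⟨(r % M, r / M),
          mem_product.2 ⟨hr.2, mem_range.2 (Nat.div_lt_of_lt_mul hr.1)⟩, Nat.mod_add_div r M⟩
    _ ≤ #R * N := card_image_le.trans (by rw [card_product, card_range])

lemma abs_card_filter_mod_eq_sub_lt {M ρ n : ℕ} (hρ : ρ < M) {x ℓ : ℝ} (hx : 0 ≤ x)
    (hℓ : 0 ≤ ℓ) (hn : x + ℓ ≤ n) :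
    |(#{r ∈ range n | r % M = ρ ∧ x ≤ r ∧ r < x + ℓ} : ℝ) - ℓ / M| < 1 := by
  have hM : (0 : ℝ) < M := by exact_mod_cast (Nat.zero_le ρ).trans_lt hρ
  have hρM : (ρ : ℝ) < M := by exact_mod_cast hρ
  set X := (x - ρ) / M
  set Y := (x + ℓ - ρ) / M
  have hX : ∀ t : ℕ, ⌈X⌉₊ ≤ t ↔ x ≤ ρ + M * t := fun t => by
    rw [Nat.ceil_le, div_le_iff₀ hM]
    constructor <;> intro <;> linarith
  have hY : ∀ t : ℕ, t < ⌈Y⌉₊ ↔ (ρ + M * t : ℝ) < x + ℓ := fun t => by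
    rw [Nat.lt_ceil, lt_div_iff₀ hM]
    constructor <;> intro <;> linarith
  have hset : ({r ∈ range n | r % M = ρ ∧ x ≤ r ∧ r < x + ℓ} : Finset ℕ)
      = (Ico ⌈X⌉₊ ⌈Y⌉₊).image fun t => ρ + M * t := by
    ext r
    simp only [mem_filter, mem_range, mem_image, mem_Ico]
    constructor
    · rintro ⟨-, hr, hxr, hrx⟩
      have hr' : ρ + M * (r / M) = r := hr ▸ Nat.mod_add_div r M
      have hr'' : (ρ + M * (r / M : ℕ) : ℝ) = r := by exact_mod_cast hr'
      exact ⟨r / M, ⟨(hX _).2 (hr'' ▸ hxr), (hY _).2 (hr'' ▸ hrx)⟩, hr'⟩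
    · rintro ⟨t, ⟨ht₁, ht₂⟩, rfl⟩
      have hlt := (hY t).1 ht₂
      refine ⟨by exact_mod_cast hlt.trans_le hn, by simp [Nat.mod_eq_of_lt hρ],
        by exact_mod_cast (hX t).1 ht₁, by exact_mod_cast hlt⟩
  have hinj : Function.Injective fun t : ℕ => ρ + M * t := fun t t' h => by
    simpa [(Nat.zero_le ρ).trans_lt hρ |>.ne'] using h
  have hXY : X ≤ Y := div_le_div_of_nonneg_right (by linarith) hM.le
  rw [hset, card_image_of_injective _ hinj, Nat.card_Ico,
    Nat.cast_sub (Nat.ceil_mono hXY)]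
  have hYX : Y - X = ℓ / M := by simp only [X, Y]; field_simp; ring
  have hX1 : -1 < X := by rw [lt_div_iff₀ hM]; linarith
  have := Nat.le_ceil X
  have := Nat.le_ceil Y
  have := Nat.ceil_lt_add_one_of_gt_neg_one hX1
  have := Nat.ceil_lt_add_one_of_gt_neg_one (hX1.trans_le hXY)
  rw [abs_sub_lt_iff]
  constructor <;> linarith

lemma abs_card_filter_mod_eq_div_eq_sub_lt {M ρ G D s : ℕ} (hρ : ρ < M) (hD : 0 < D)
    (hs : s < G) :
    |(#{r ∈ range D | r % M = ρ ∧ G * r / D = s} : ℝ) - D / (G * M)| < 1 := by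
  have hG : (0 : ℝ) < G := by exact_mod_cast (Nat.zero_le s).trans_lt hs
  have hword : ∀ r, G * r / D = s ↔ (s * D / G : ℝ) ≤ r ∧ (r : ℝ) < s * D / G + D / G := by
    intro r
    have : G * r / D = s ↔ s * D ≤ G * r ∧ G * r < s * D + D := by
      rw [← Nat.le_div_iff_mul_le hD, ← add_one_mul, ← Nat.div_lt_iff_lt_mul hD]
      omega
    rw [this, ← add_div, div_le_iff₀ hG, lt_div_iff₀ hG, mul_comm (r : ℝ)]
    norm_cast
  simp_rw [hword]
  rw [div_mul_eq_div_div]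
  refine abs_card_filter_mod_eq_sub_lt hρ (by positivity) (by positivity) ?_
  have hs' : (s : ℝ) + 1 ≤ G := by exact_mod_cast hs
  rw [← add_div, div_le_iff₀ hG]
  nlinarith [(Nat.cast_pos.2 hD : (0 : ℝ) < D)]

lemma abs_card_filter_mod_eq_div_eq_sub_le_one {M ρ G D s s' : ℕ} (hρ : ρ < M) (hD : 0 < D)
    (hs : s < G) (hs' : s' < G) :
    |(#{r ∈ range D | r % M = ρ ∧ G * r / D = s} : ℤ) -
      #{r ∈ range D | r % M = ρ ∧ G * r / D = s'}| ≤ 1 := by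
  set A := #{r ∈ range D | r % M = ρ ∧ G * r / D = s}
  set B := #{r ∈ range D | r % M = ρ ∧ G * r / D = s'}
  have h₁ := abs_sub_lt_iff.1 (abs_card_filter_mod_eq_div_eq_sub_lt hρ hD hs)
  have h₂ := abs_sub_lt_iff.1 (abs_card_filter_mod_eq_div_eq_sub_lt hρ hD hs')
  have hlt : |(A : ℝ) - B| < 2 := by
    rw [abs_sub_lt_iff]
    constructor <;> linarith
  have : |(A : ℤ) - B| < 2 := by exact_mod_cast hlt
  omega

section Orbit

variable {g b a : ℕ}

noncomputable def orbit (g b a k : ℕ) : Finset ℕ :=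
  (range (ordg g (b ^ k))).image fun m => a * g ^ m % b ^ k

lemma injOn_orbit (hb : 0 < b) (hbg : b.Coprime g) (hab : a.Coprime b) (k : ℕ) :
    Set.InjOn (fun m => a * g ^ m % b ^ k) (range (ordg g (b ^ k))) := by
  intro m hm m' hm' h
  have hcast := (ZMod.natCast_eq_natCast_iff' (a * g ^ m) (a * g ^ m') (b ^ k)).2 h
  push_cast at hcast
  have ha : IsUnit (a : ZMod (b ^ k)) := (ZMod.isUnit_iff_coprime a (b ^ k)).2 (hab.pow_right k)
  rw [coe_range, ordg_eq_orderOf (pow_pos hb k) (hbg.symm.pow_right k)] at hm hm'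
  exact pow_injOn_Iio_orderOf hm hm' (ha.mul_left_cancel hcast)

lemma card_orbit (hb : 0 < b) (hbg : b.Coprime g) (hab : a.Coprime b) (k : ℕ) :
    #(orbit g b a k) = ordg g (b ^ k) := by
  rw [orbit, card_image_of_injOn (injOn_orbit hb hbg hab k), card_range]

lemma lt_of_mem_orbit (hb : 0 < b) {k r : ℕ} (hr : r ∈ orbit g b a k) : r < b ^ k := by
  obtain ⟨m, -, rfl⟩ := mem_image.1 hr
  exact Nat.mod_lt _ (pow_pos hb k)

lemma mul_pow_mod_mem_orbit (hb : 0 < b) (hbg : b.Coprime g) (k m : ℕ) :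
    a * g ^ m % b ^ k ∈ orbit g b a k := by
  have hord := ordg_eq_orderOf (pow_pos hb k) (hbg.symm.pow_right k)
  refine mem_image.2 ⟨m % ordg g (b ^ k),
    mem_range.2 (Nat.mod_lt _ (ordg_pos (pow_pos hb k) (hbg.symm.pow_right k))), ?_⟩
  refine (ZMod.natCast_eq_natCast_iff' _ _ _).1 ?_
  push_cast
  rw [hord, pow_mod_orderOf]

lemma orbit_add_eq (hb : 0 < b) (hbg : b.Coprime g) (hab : a.Coprime b) {c t : ℕ}
    (hct : ordg g (b ^ (c + t)) = b ^ t * ordg g (b ^ c)) :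
    orbit g b a (c + t) = {r ∈ range (b ^ (c + t)) | r % b ^ c ∈ orbit g b a c} := by
  refine eq_of_subset_of_card_le (fun r hr => ?_) ?_
  · obtain ⟨m, -, rfl⟩ := mem_image.1 hr
    rw [mem_filter, mem_range, Nat.mod_mod_of_dvd _ (pow_dvd_pow b (Nat.le_add_right c t))]
    exact ⟨Nat.mod_lt _ (pow_pos hb _), mul_pow_mod_mem_orbit hb hbg c m⟩
  · rw [card_orbit hb hbg hab, hct, pow_add, ← card_orbit hb hbg hab c, mul_comm (b ^ t)]
    exact card_filter_mod_mem_le _ _ _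

lemma nu_eq_card_filter_orbit (hb : 0 < b) (hbg : b.Coprime g) (hab : a.Coprime b)
    (j k s : ℕ) : nu g b a j k s = #{r ∈ orbit g b a k | g ^ j * r / b ^ k = s} := by
  have hd := ordg_pos (pow_pos hb k) (hbg.symm.pow_right k)
  have hIcc :
      Icc j (ordg g (b ^ k) + j - 1) = (range (ordg g (b ^ k))).map (addRightEmbedding j) := by
    ext i
    simp only [mem_Icc, mem_map, mem_range, addRightEmbedding_apply]
    constructor
    · exact fun h => ⟨i - j, by omega, by omega⟩
    · rintro ⟨m, hm, rfl⟩
      omega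
  rw [nu, orbit, filter_image, card_image_of_injOn ((injOn_orbit hb hbg hab k).mono
    (filter_subset _ _)), hIcc, filter_map, card_map]
  congr 1
  refine filter_congr fun m _ => ?_
  simp only [Function.comp_apply, addRightEmbedding_apply, pow_add, ← mul_assoc,
    Nat.mul_div_mod_eq_mul_mod_div _ _ (pow_pos hb k)]

lemma nu_eq_sum_card_fiber (hb : 0 < b) (hbg : b.Coprime g) (hab : a.Coprime b)
    {c t : ℕ} (hct : ordg g (b ^ (c + t)) = b ^ t * ordg g (b ^ c)) (j s : ℕ) :
    nu g b a j (c + t) s = ∑ ρ ∈ orbit g b a c,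
      #{r ∈ range (b ^ (c + t)) | r % b ^ c = ρ ∧ g ^ j * r / b ^ (c + t) = s} := by
  rw [nu_eq_card_filter_orbit hb hbg hab, orbit_add_eq hb hbg hab hct, filter_filter,
    card_eq_sum_card_fiberwise fun r hr => (mem_filter.1 hr).2.1]
  refine sum_congr rfl fun ρ hρ => ?_
  rw [filter_filter]
  exact congrArg card (filter_congr fun r _ =>
    ⟨fun ⟨⟨_, h⟩, hr⟩ => ⟨hr, h⟩, fun ⟨hr, h⟩ => ⟨⟨hr ▸ hρ, h⟩, hr⟩⟩)

lemma abs_nu_sub_nu_le (hb : 0 < b) (hbg : b.Coprime g) (hab : a.Coprime b)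
    {c t : ℕ} (hct : ordg g (b ^ (c + t)) = b ^ t * ordg g (b ^ c)) {j s s' : ℕ}
    (hs : s < g ^ j) (hs' : s' < g ^ j) :
    |(nu g b a j (c + t) s : ℤ) - nu g b a j (c + t) s'| ≤ ordg g (b ^ c) := by
  rw [nu_eq_sum_card_fiber hb hbg hab hct, nu_eq_sum_card_fiber hb hbg hab hct]
  push_cast
  rw [← sum_sub_distrib, ← card_orbit hb hbg hab c (a := a), card_eq_sum_ones, Nat.cast_sum]
  refine (abs_sum_le_sum_abs _ _).trans (sum_le_sum fun ρ hρ => ?_)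
  exact abs_card_filter_mod_eq_div_eq_sub_le_one (lt_of_mem_orbit hb hρ) (pow_pos hb _) hs
    hs'

end Orbit

theorem oscillation_bounded_general (g b a j : ℕ) (hg : 2 ≤ g) (hb : 1 < b)
    (hbg : Nat.gcd b g = 1) (hab : Nat.gcd a b = 1) :
    ∃ C : ℕ, ∀ k : ℕ, cg g b ≤ k → ∀ s : ℕ, s < g ^ j → ∀ s' : ℕ, s' < g ^ j →
      |(nu g b a j k s : ℤ) - (nu g b a j k s' : ℤ)| ≤ (C : ℤ) := by
  refine ⟨ordg g (b ^ cg g b), fun k hk s hs s' hs' => ?_⟩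
  obtain ⟨t, rfl⟩ := Nat.exists_eq_add_of_le hk
  have hct := ordg_pow_cg_add (by omega) (by omega) hbg t
  exact abs_nu_sub_nu_le (by omega) hbg hab hct hs hs'

/-- There is a nonnegative constant `C` (depending only on `g, a, b, j`)
bounding the oscillation of absolute frequencies: `|ν_k(s) − ν_k(s')| ≤ C` for all
`k ≥ c_g(b)` and all `s, s' < g^j`. -/
theorem oscillation_bounded (g b a j : ℕ) (hg : 2 ≤ g) (hb : 1 < b)
    (hbg : Nat.gcd b g = 1) (ha : 0 < a) (hab : Nat.gcd a b = 1) (hj : 1 ≤ j) :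
    ∃ C : ℕ, ∀ k : ℕ, cg g b ≤ k → ∀ s : ℕ, s < g ^ j → ∀ s' : ℕ, s' < g ^ j →
      |(nu g b a j k s : ℤ) - (nu g b a j k s' : ℤ)| ≤ (C : ℤ) :=
  oscillation_bounded_general g b a j hg hb hbg hab
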